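/- arXiv:2205.14210 — 3 statements merged into one kernel-verified Lean document; each statement's English description precedes it below -/
import Mathlib

section
/- Multiplicative-weights potential upper bound: in the MWU setup, for every horizon T one has Γ(T) ≤ m · exp(−η · Σ_{t=0}^{T−1} ⟨p^(t), m^(t)⟩), where ⟨p^(t), m^(t)⟩ = Σ_{j=1}^{m} p^(t)_j · m^(t)_j. In particular, if ⟨p^(t), m^(t)⟩ ≥ 0 for every t < T, then Γ(T) ≤ m. -/
open Finset

/-- Multiplicative Weights Update weights: `w^(0)_j = 1`,
`w^(t+1)_j = w^(t)_j * (1 - η * c^(t)_j)`. -/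
noncomputable def mwuW (m : ℕ) (η : ℝ) (c : ℕ → Fin m → ℝ) : ℕ → Fin m → ℝ
  | 0 => fun _ => 1
  | (t + 1) => fun j => mwuW m η c t j * (1 - η * c t j)

/-- MWU potential `Γ(t) = Σ_j w^(t)_j`. -/
noncomputable def mwuGamma (m : ℕ) (η : ℝ) (c : ℕ → Fin m → ℝ) (t : ℕ) : ℝ :=
  ∑ j, mwuW m η c t j

/-- MWU probabilities `p^(t)_j = w^(t)_j / Γ(t)`. -/
noncomputable def mwuP (m : ℕ) (η : ℝ) (c : ℕ → Fin m → ℝ) (t : ℕ) (j : Fin m) : ℝ :=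
  mwuW m η c t j / mwuGamma m η c t

lemma mwuW_pos (m : ℕ) (η : ℝ) (hη0 : 0 < η) (hη : η ≤ 1 / 2) (c : ℕ → Fin m → ℝ)
    (T : ℕ) (hc : ∀ t < T, ∀ j, -1 ≤ c t j ∧ c t j ≤ 1) :
    ∀ t ≤ T, ∀ j, 0 < mwuW m η c t j := by
  intro t ht
  induction t with
  | zero => intro j; simp [mwuW]
  | succ t ih =>
    intro j
    have hct := hc t (by omega) j
    have h1 : η * c t j ≤ η * 1 := by nlinarith [hct.2]
    have h2 : η * c t j < 1 := by nlinarith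
    have := ih (by omega) j
    have : 0 < 1 - η * c t j := by linarith
    simp only [mwuW]
    positivity

/-- Multiplicative-weights potential upper bound:
`Γ(T) ≤ m · exp(−η · Σ_{t<T} ⟨p^(t), c^(t)⟩)`; in particular, if all the inner
products `⟨p^(t), c^(t)⟩` are nonnegative, then `Γ(T) ≤ m`. -/
theorem mwu_potential_upper_bound (m : ℕ) (hm : 2 ≤ m) (η : ℝ) (hη0 : 0 < η)
    (hη : η ≤ 1 / 2) (T : ℕ) (c : ℕ → Fin m → ℝ)
    (hc : ∀ t < T, ∀ j, -1 ≤ c t j ∧ c t j ≤ 1) :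
    mwuGamma m η c T ≤
      (m : ℝ) * Real.exp (-η * ∑ t ∈ Finset.range T, ∑ j, mwuP m η c t j * c t j) ∧
    ((∀ t < T, 0 ≤ ∑ j, mwuP m η c t j * c t j) → mwuGamma m η c T ≤ (m : ℝ)) := by
  have hwpos := mwuW_pos m η hη0 hη c T hc
  have hGpos : ∀ t ≤ T, 0 < mwuGamma m η c t := by
    intro t ht
    apply Finset.sum_pos (fun j _ => hwpos t ht j)
    exact ⟨⟨0, by omega⟩, Finset.mem_univ _⟩
  -- step: Γ(t+1) = Γ(t) * (1 - η * ⟨p,c⟩)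
  have hstep : ∀ t < T, mwuGamma m η c (t + 1) =
      mwuGamma m η c t * (1 - η * ∑ j, mwuP m η c t j * c t j) := by
    intro t ht
    have hG := (hGpos t (le_of_lt ht)).ne'
    have h1 : ∑ j, mwuP m η c t j * c t j =
        (∑ j, mwuW m η c t j * c t j) / mwuGamma m η c t := by
      rw [Finset.sum_div]
      exact Finset.sum_congr rfl fun j _ => by rw [mwuP, div_mul_eq_mul_div]
    have h2 : mwuGamma m η c t *
        (1 - η * ((∑ j, mwuW m η c t j * c t j) / mwuGamma m η c t)) =
        mwuGamma m η c t - η * ∑ j, mwuW m η c t j * c t j := by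
      field_simp
    rw [h1, h2, Finset.mul_sum]
    conv_lhs => rw [mwuGamma]
    simp only [mwuW]
    rw [show (mwuGamma m η c t : ℝ) = ∑ j, mwuW m η c t j from rfl,
      ← Finset.sum_sub_distrib]
    exact Finset.sum_congr rfl fun j _ => by ring
  -- main bound by induction
  have main : ∀ S ≤ T, mwuGamma m η c S ≤
      (m : ℝ) * Real.exp (-η * ∑ t ∈ Finset.range S, ∑ j, mwuP m η c t j * c t j) := by
    intro S hS
    induction S with
    | zero => simp [mwuGamma, mwuW]
    | succ S ih =>
      have ihS := ih (by omega)
      rw [neg_mul] at ihS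
      rw [hstep S (by omega), Finset.sum_range_succ, neg_mul, mul_add, neg_add,
        Real.exp_add, ← mul_assoc]
      set x := ∑ j, mwuP m η c S j * c S j
      have h1 : 1 - η * x ≤ Real.exp (-(η * x)) := by
        have := Real.add_one_le_exp (-(η * x))
        linarith
      calc mwuGamma m η c S * (1 - η * x)
          ≤ mwuGamma m η c S * Real.exp (-(η * x)) := by
            apply mul_le_mul_of_nonneg_left h1 (hGpos S (by omega)).le
        _ ≤ (m : ℝ) * Real.exp (-(η * ∑ t ∈ Finset.range S, ∑ j, mwuP m η c t j * c t j)) *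
              Real.exp (-(η * x)) := by
            apply mul_le_mul_of_nonneg_right ihS (Real.exp_nonneg _)
  refine ⟨main T le_rfl, fun hnn => ?_⟩
  calc mwuGamma m η c T ≤ _ := main T le_rfl
    _ ≤ (m : ℝ) * 1 := by
        apply mul_le_mul_of_nonneg_left _ (by positivity)
        rw [Real.exp_le_one_iff]
        have : 0 ≤ ∑ t ∈ Finset.range T, ∑ j, mwuP m η c t j * c t j :=
          Finset.sum_nonneg fun t ht => hnn t (Finset.mem_range.mp ht)
        nlinarith
    _ = (m : ℝ) := mul_one _
end

section
/- Multiplicative-weights regret bound: in the MWU setup, for every constraint index j ∈ {1,…,m}, Σ_{t=0}^{T−1} ⟨p^(t), m^(t)⟩ ≤ Σ_{t=0}^{T−1} m^(t)_j + η · Σ_{t=0}^{T−1} |m^(t)_j| + (ln m)/η, where ⟨p^(t), m^(t)⟩ = Σ_{j=1}^{m} p^(t)_j · m^(t)_j. -/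
open Finset

lemma log_one_sub_ge {z : ℝ} (h1 : -(1/2) ≤ z) (h2 : z ≤ 1/2) :
    -z - z^2 ≤ Real.log (1 - z) := by
  rcases le_or_gt z 0 with hz | hz
  · have h0 : (0:ℝ) < 1 - z := by linarith
    have h := Real.one_sub_inv_le_log_of_pos h0
    have hinv : (1 - z) * (1 - z)⁻¹ = 1 := mul_inv_cancel₀ (by linarith)
    nlinarith [sq_nonneg z, mul_pos h0 h0]
  · set f : ℝ → ℝ := fun x => Real.log (1 - x) + x + x^2 with hf
    have hder : ∀ x ∈ Set.Icc (0:ℝ) (1/2),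
        HasDerivAt f ((1-x)⁻¹ * (-1) + (1 + 2*x)) x := by
      intro x hx
      have hne : (1:ℝ) - x ≠ 0 := by
        intro h; nlinarith [hx.2, sub_eq_zero.mp h]
      have h1 : HasDerivAt (fun x : ℝ => Real.log (1 - x)) ((1-x)⁻¹ * (-1)) x := by
        have hb : HasDerivAt (fun x : ℝ => 1 - x) (-1) x := by
          simpa [Pi.sub_def] using (hasDerivAt_const x (1:ℝ)).sub (hasDerivAt_id x)
        exact (Real.hasDerivAt_log hne).comp x hb
      have h2 : HasDerivAt (fun x : ℝ => x + x^2) (1 + 2*x) x := by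
        have := (hasDerivAt_id x).add (hasDerivAt_pow 2 x)
        simpa [mul_comm, Pi.add_def] using this
      simpa [hf, add_assoc, Pi.add_def] using h1.add h2
    have hmono : MonotoneOn f (Set.Icc (0:ℝ) (1/2)) := by
      apply monotoneOn_of_deriv_nonneg (convex_Icc _ _)
      · exact fun x hx => (hder x hx).differentiableAt.continuousAt.continuousWithinAt
      · intro x hx
        rw [interior_Icc] at hx
        exact ((hder x ⟨le_of_lt hx.1, le_of_lt hx.2⟩).differentiableAt).differentiableWithinAt
      · intro x hx
        rw [interior_Icc] at hx
        rw [(hder x ⟨le_of_lt hx.1, le_of_lt hx.2⟩).deriv]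
        have h0 : (0:ℝ) < 1 - x := by linarith [hx.2]
        have hinv : (1 - x) * (1 - x)⁻¹ = 1 := mul_inv_cancel₀ (by linarith)
        nlinarith [hx.1, hx.2]
    have h0mem : (0:ℝ) ∈ Set.Icc (0:ℝ) (1/2) := by constructor <;> norm_num
    have hzmem : z ∈ Set.Icc (0:ℝ) (1/2) := ⟨le_of_lt hz, h2⟩
    have := hmono h0mem hzmem (le_of_lt hz)
    simp only [hf] at this
    simp at this
    linarith

/-- Multiplicative-weights regret bound: for every constraint index `j`,
`Σ_{t<T} ⟨p^(t), c^(t)⟩ ≤ Σ_{t<T} c^(t)_j + η·Σ_{t<T} |c^(t)_j| + (ln m)/η`. -/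
theorem mwu_regret_bound (m : ℕ) (hm : 2 ≤ m) (η : ℝ) (hη0 : 0 < η)
    (hη : η ≤ 1 / 2) (T : ℕ) (c : ℕ → Fin m → ℝ)
    (hc : ∀ t < T, ∀ j, -1 ≤ c t j ∧ c t j ≤ 1) (j : Fin m) :
    ∑ t ∈ Finset.range T, ∑ i, mwuP m η c t i * c t i ≤
      ∑ t ∈ Finset.range T, c t j + η * ∑ t ∈ Finset.range T, |c t j|
        + Real.log m / η := by
  haveI : Nonempty (Fin m) := ⟨⟨0, by omega⟩⟩
  set G : ℕ → ℝ := fun t => ∑ i, mwuP m η c t i * c t i with hG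
  have hfac : ∀ t < T, ∀ i : Fin m, (0:ℝ) < 1 - η * c t i := by
    intro t ht i
    nlinarith [(hc t ht i).2, (hc t ht i).1]
  have hwpos : ∀ t, t ≤ T → ∀ i, 0 < mwuW m η c t i := by
    intro t
    induction t with
    | zero => intro _ i; simp [mwuW]
    | succ t ih =>
      intro ht i
      have h1 := ih (by omega) i
      have h2 := hfac t (by omega) i
      simpa [mwuW] using mul_pos h1 h2
  have hΓpos : ∀ t, t ≤ T → 0 < mwuGamma m η c t := by
    intro t ht
    exact Finset.sum_pos (fun i _ => hwpos t ht i) Finset.univ_nonempty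
  have hstep : ∀ t < T, mwuGamma m η c (t+1) = mwuGamma m η c t * (1 - η * G t) := by
    intro t ht
    have hΓ : mwuGamma m η c t ≠ 0 := (hΓpos t (le_of_lt ht)).ne'
    have hS : G t = (∑ i, mwuW m η c t i * c t i) / mwuGamma m η c t := by
      rw [hG]
      simp only [Finset.sum_div]
      apply Finset.sum_congr rfl
      intro i _
      rw [mwuP]; ring
    have e1 : mwuGamma m η c (t+1) = mwuGamma m η c t - η * ∑ i, mwuW m η c t i * c t i := by
      show (∑ i, mwuW m η c t i * (1 - η * c t i)) = _
      rw [mwuGamma, Finset.mul_sum, ← Finset.sum_sub_distrib]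
      apply Finset.sum_congr rfl
      intro i _; ring
    rw [e1, hS]
    field_simp
  have hΓbound : ∀ s, s ≤ T →
      mwuGamma m η c s ≤ (m : ℝ) * Real.exp (-η * ∑ t ∈ Finset.range s, G t) := by
    intro s
    induction s with
    | zero =>
      intro _
      simp [mwuGamma, mwuW]
    | succ s ih =>
      intro hs
      have hsT : s < T := by omega
      have h1 : 1 - η * G s ≤ Real.exp (-(η * G s)) := by
        linarith [Real.add_one_le_exp (-(η * G s))]
      calc mwuGamma m η c (s+1) = mwuGamma m η c s * (1 - η * G s) := hstep s hsT
        _ ≤ mwuGamma m η c s * Real.exp (-(η * G s)) :=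
            mul_le_mul_of_nonneg_left h1 (le_of_lt (hΓpos s (le_of_lt hsT)))
        _ ≤ ((m : ℝ) * Real.exp (-η * ∑ t ∈ Finset.range s, G t)) * Real.exp (-(η * G s)) :=
            mul_le_mul_of_nonneg_right (ih (le_of_lt hsT)) (le_of_lt (Real.exp_pos _))
        _ = (m : ℝ) * Real.exp (-η * ∑ t ∈ Finset.range (s+1), G t) := by
            rw [mul_assoc, ← Real.exp_add, Finset.sum_range_succ]
            ring_nf
  have hwlog : ∀ s, s ≤ T →
      ∑ t ∈ Finset.range s, (-(η * c t j) - (η * c t j)^2) ≤ Real.log (mwuW m η c s j) := by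
    intro s
    induction s with
    | zero => intro _; simp [mwuW]
    | succ s ih =>
      intro hs
      have hsT : s < T := by omega
      have hz1 : -(1/2) ≤ η * c s j := by nlinarith [(hc s hsT j).1, (hc s hsT j).2]
      have hz2 : η * c s j ≤ 1/2 := by nlinarith [(hc s hsT j).1, (hc s hsT j).2]
      have hlog := log_one_sub_ge hz1 hz2
      have hmul : Real.log (mwuW m η c (s+1) j)
          = Real.log (mwuW m η c s j) + Real.log (1 - η * c s j) := by
        show Real.log (mwuW m η c s j * (1 - η * c s j)) = _
        exact Real.log_mul (hwpos s (le_of_lt hsT) j).ne' (hfac s hsT j).ne'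
      rw [hmul, Finset.sum_range_succ]
      exact add_le_add (ih (le_of_lt hsT)) hlog
  -- combine
  have hwleΓ : mwuW m η c T j ≤ mwuGamma m η c T :=
    Finset.single_le_sum (fun i _ => le_of_lt (hwpos T le_rfl i)) (Finset.mem_univ j)
  have hlogchain : Real.log (mwuW m η c T j) ≤
      Real.log m + (-η * ∑ t ∈ Finset.range T, G t) := by
    have h1 : Real.log (mwuW m η c T j) ≤ Real.log (mwuGamma m η c T) :=
      Real.log_le_log (hwpos T le_rfl j) hwleΓ
    have h2 : Real.log (mwuGamma m η c T) ≤
        Real.log ((m : ℝ) * Real.exp (-η * ∑ t ∈ Finset.range T, G t)) :=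
      Real.log_le_log (hΓpos T le_rfl) (hΓbound T le_rfl)
    have h3 : Real.log ((m : ℝ) * Real.exp (-η * ∑ t ∈ Finset.range T, G t))
        = Real.log m + (-η * ∑ t ∈ Finset.range T, G t) := by
      rw [Real.log_mul (by positivity) (Real.exp_ne_zero _), Real.log_exp]
    linarith
  have he1 : ∑ t ∈ Finset.range T, -(η * c t j) = -(η * ∑ t ∈ Finset.range T, c t j) := by
    rw [Finset.sum_neg_distrib, Finset.mul_sum]
  have he2 : ∑ t ∈ Finset.range T, (η * c t j)^2 = η^2 * ∑ t ∈ Finset.range T, (c t j)^2 := by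
    rw [Finset.mul_sum]
    apply Finset.sum_congr rfl
    intro t _; ring
  have hexpand : ∑ t ∈ Finset.range T, (-(η * c t j) - (η * c t j)^2)
      = -(η * ∑ t ∈ Finset.range T, c t j) - η^2 * ∑ t ∈ Finset.range T, (c t j)^2 := by
    rw [Finset.sum_sub_distrib, he1, he2]
  have hsq : ∑ t ∈ Finset.range T, (c t j)^2 ≤ ∑ t ∈ Finset.range T, |c t j| := by
    apply Finset.sum_le_sum
    intro t ht
    have ht' := Finset.mem_range.mp ht
    have habs : |c t j| ≤ 1 := abs_le.mpr ⟨(hc t ht' j).1, (hc t ht' j).2⟩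
    nlinarith [abs_nonneg (c t j), sq_abs (c t j)]
  have hkey : -(η * ∑ t ∈ Finset.range T, c t j) - η^2 * ∑ t ∈ Finset.range T, (c t j)^2
      ≤ Real.log m + -η * ∑ t ∈ Finset.range T, G t := by
    rw [← hexpand]
    exact le_trans (hwlog T le_rfl) hlogchain
  have hsq' : η^2 * ∑ t ∈ Finset.range T, (c t j)^2 ≤ η^2 * ∑ t ∈ Finset.range T, |c t j| :=
    mul_le_mul_of_nonneg_left hsq (sq_nonneg η)
  have hfin : η * ∑ t ∈ Finset.range T, G t ≤
      Real.log m + η * ∑ t ∈ Finset.range T, c t j + η^2 * ∑ t ∈ Finset.range T, |c t j| := by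
    linarith
  show ∑ t ∈ Finset.range T, G t ≤ _
  rw [← mul_le_mul_iff_right₀ hη0]
  calc η * ∑ t ∈ Finset.range T, G t
      ≤ Real.log m + η * ∑ t ∈ Finset.range T, c t j
        + η^2 * ∑ t ∈ Finset.range T, |c t j| := hfin
    _ = η * (∑ t ∈ Finset.range T, c t j + η * ∑ t ∈ Finset.range T, |c t j|
        + Real.log m / η) := by field_simp; ring
end

section
/- Per-constraint violation bound for MWU applied to LP feasibility: let A ∈ ℝ^{m×n}, b ∈ ℝ^m with m ≥ 2, let ρ > 0, η ∈ (0, 1/2], and T ≥ 1. Let x^(0), …, x^(T−1) ∈ ℝ^n be vectors with x^(t) ≥ 0 componentwise such that, for every t and every j ∈ {1,…,m}, A_j x^(t) − b_j ∈ [−ρ, ρ], and define the cost vectors m^(t)_j = (A_j x^(t) − b_j)/ρ together with the MWU weights and probabilities p^(t) for these costs. Assume the oracle condition Σ_{j=1}^{m} p^(t)_j · (A_j x^(t) − b_j) ≥ 0 holds for every t < T. Then the averaged point x̄ = (1/T) Σ_{t=0}^{T−1} x^(t) satisfies x̄ ≥ 0 and, for every j ∈ {1,…,m}, A_j x̄ −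 b_j ≥ −ρ · (η + (ln m)/(η·T)). -/
open Finset

lemma mwu_key_exp {z : ℝ} (h1 : -(1/2) ≤ z) (h2 : z ≤ 1/2) :
    Real.exp (-z - z^2) ≤ 1 - z := by
  have hE := Real.exp_pos (z + z^2)
  have key : 1 ≤ (1 - z) * Real.exp (z + z^2) := by
    rcases le_or_gt 0 z with hz | hz
    · have h := Real.quadratic_le_exp_of_nonneg (by nlinarith : (0:ℝ) ≤ z + z^2)
      nlinarith
    · have h := Real.add_one_le_exp (z + z^2)
      nlinarith
  have hrw : -z - z^2 = -(z + z^2) := by ring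
  rw [hrw, Real.exp_neg, inv_eq_one_div, div_le_iff₀ hE]
  nlinarith

lemma mwuW_prod (m : ℕ) (η : ℝ) (c : ℕ → Fin m → ℝ) (j : Fin m) (s : ℕ) :
    mwuW m η c s j = ∏ t ∈ Finset.range s, (1 - η * c t j) := by
  induction s with
  | zero => simp [mwuW]
  | succ s ih => simp [mwuW, Finset.prod_range_succ, ih]

/-- Per-constraint violation bound for MWU applied to LP feasibility: under the
oracle condition, the averaged point `x̄` is nonnegative and satisfies
`A_j x̄ − b_j ≥ −ρ·(η + (ln m)/(η·T))` for every constraint `j`. -/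
theorem mwu_lp_violation_bound (m n : ℕ) (hm : 2 ≤ m)
    (A : Matrix (Fin m) (Fin n) ℝ) (b : Fin m → ℝ)
    (ρ : ℝ) (hρ : 0 < ρ) (η : ℝ) (hη0 : 0 < η) (hη : η ≤ 1 / 2)
    (T : ℕ) (hT : 1 ≤ T)
    (x : ℕ → Fin n → ℝ)
    (hx : ∀ t < T, ∀ i, 0 ≤ x t i)
    (hres : ∀ t < T, ∀ j, -ρ ≤ A.mulVec (x t) j - b j ∧ A.mulVec (x t) j - b j ≤ ρ)
    (c : ℕ → Fin m → ℝ)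
    (hc : ∀ t j, c t j = (A.mulVec (x t) j - b j) / ρ)
    (horacle : ∀ t < T, 0 ≤ ∑ j, mwuP m η c t j * (A.mulVec (x t) j - b j))
    (xbar : Fin n → ℝ)
    (hxbar : xbar = fun i => (1 / (T : ℝ)) * ∑ t ∈ Finset.range T, x t i) :
    (∀ i, 0 ≤ xbar i) ∧
    ∀ j, A.mulVec xbar j - b j ≥ -ρ * (η + Real.log m / (η * T)) := by
  have hT0 : (0:ℝ) < T := by exact_mod_cast hT
  have hρne : ρ ≠ 0 := ne_of_gt hρ
  have hηne : η ≠ 0 := ne_of_gt hη0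
  haveI : Nonempty (Fin m) := ⟨⟨0, by omega⟩⟩
  -- bounds on costs
  have hcb : ∀ t < T, ∀ j, -1 ≤ c t j ∧ c t j ≤ 1 := by
    intro t ht j
    obtain ⟨h1, h2⟩ := hres t ht j
    rw [hc]
    constructor
    · rw [le_div_iff₀ hρ]; linarith
    · rw [div_le_one hρ]; linarith
  -- factors are ≥ 1/2
  have hfac : ∀ t < T, ∀ j, (1:ℝ)/2 ≤ 1 - η * c t j := by
    intro t ht j
    obtain ⟨h1, h2⟩ := hcb t ht j
    nlinarith
  -- weights positive
  have hwpos : ∀ j : Fin m, ∀ t, t ≤ T → 0 < mwuW m η c t j := by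
    intro j t
    induction t with
    | zero => intro _; simp [mwuW]
    | succ t ih =>
      intro h
      have ht : t < T := h
      have := hfac t ht j
      simp only [mwuW]
      exact mul_pos (ih (le_of_lt ht)) (by linarith)
  have hGpos : ∀ t ≤ T, 0 < mwuGamma m η c t := by
    intro t ht
    exact Finset.sum_pos (fun j _ => hwpos j t ht) Finset.univ_nonempty
  -- Gamma decreasing
  have hGstep : ∀ t < T, mwuGamma m η c (t+1) ≤ mwuGamma m η c t := by
    intro t ht
    have hG := hGpos t (le_of_lt ht)
    -- oracle in terms of weights
    have hO := horacle t ht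
    have hOw : ∑ j, mwuP m η c t j * (A.mulVec (x t) j - b j)
        = (∑ j, mwuW m η c t j * (A.mulVec (x t) j - b j)) / mwuGamma m η c t := by
      rw [Finset.sum_div]
      refine Finset.sum_congr rfl fun j _ => ?_
      rw [mwuP]; ring
    have hwr : 0 ≤ ∑ j, mwuW m η c t j * (A.mulVec (x t) j - b j) := by
      rw [hOw, le_div_iff₀ hG, zero_mul] at hO
      exact hO
    have hS : 0 ≤ ∑ j, mwuW m η c t j * c t j := by
      have : ∑ j, mwuW m η c t j * c t j
          = (∑ j, mwuW m η c t j * (A.mulVec (x t) j - b j)) / ρ := by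
        rw [Finset.sum_div]
        refine Finset.sum_congr rfl fun j _ => ?_
        rw [hc]; ring
      rw [this]
      exact div_nonneg hwr hρ.le
    have hexp : mwuGamma m η c (t+1)
        = mwuGamma m η c t - η * ∑ j, mwuW m η c t j * c t j := by
      simp only [mwuGamma, mwuW, Finset.mul_sum]
      rw [← Finset.sum_sub_distrib]
      refine Finset.sum_congr rfl fun j _ => ?_
      ring
    rw [hexp]
    nlinarith
  -- Gamma T ≤ m
  have hG0 : mwuGamma m η c 0 = m := by simp [mwuGamma, mwuW]
  have hGle : ∀ t ≤ T, mwuGamma m η c t ≤ m := by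
    intro t
    induction t with
    | zero => intro _; rw [hG0]
    | succ t ih =>
      intro h
      have ht : t < T := h
      exact le_trans (hGstep t ht) (ih (le_of_lt ht))
  have hwT : ∀ j, mwuW m η c T j ≤ m := by
    intro j
    refine le_trans ?_ (hGle T le_rfl)
    exact Finset.single_le_sum (fun i _ => (hwpos i T le_rfl).le) (Finset.mem_univ j)
  -- main per-constraint bound
  have hsumc : ∀ j, -(Real.log m / η + η * T) ≤ ∑ t ∈ Finset.range T, c t j := by
    intro j
    have hchain : Real.exp (∑ t ∈ Finset.range T, (-(η * c t j) - η^2)) ≤ m := by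
      rw [Real.exp_sum]
      calc ∏ t ∈ Finset.range T, Real.exp (-(η * c t j) - η^2)
          ≤ ∏ t ∈ Finset.range T, (1 - η * c t j) := by
            refine Finset.prod_le_prod (fun t _ => (Real.exp_pos _).le) ?_
            intro t ht
            rw [Finset.mem_range] at ht
            obtain ⟨h1, h2⟩ := hcb t ht j
            have hz1 : -(1/2) ≤ η * c t j := by nlinarith
            have hz2 : η * c t j ≤ 1/2 := by nlinarith
            refine le_trans ?_ (mwu_key_exp hz1 hz2)
            apply Real.exp_le_exp.mpr
            nlinarith [mul_nonneg (sq_nonneg η) (by nlinarith : (0:ℝ) ≤ 1 - (c t j)^2)]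
        _ = mwuW m η c T j := (mwuW_prod m η c j T).symm
        _ ≤ m := hwT j
    have hlog : ∑ t ∈ Finset.range T, (-(η * c t j) - η^2) ≤ Real.log m := by
      rw [Real.le_log_iff_exp_le (by positivity : (0:ℝ) < (m:ℝ))]
      exact hchain
    have hsplit : ∑ t ∈ Finset.range T, (-(η * c t j) - η^2)
        = -η * (∑ t ∈ Finset.range T, c t j) - η^2 * T := by
      rw [Finset.sum_sub_distrib, Finset.sum_const, Finset.card_range, nsmul_eq_mul]
      have : ∑ t ∈ Finset.range T, -(η * c t j) = -η * ∑ t ∈ Finset.range T, c t j := by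
        rw [Finset.mul_sum]
        exact Finset.sum_congr rfl fun t _ => by ring
      rw [this]
      ring
    rw [hsplit] at hlog
    have h2 : η * (Real.log ↑m / η) = Real.log ↑m := by field_simp
    nlinarith [hlog, h2]
  constructor
  · intro i
    rw [hxbar]
    have : 0 ≤ ∑ t ∈ Finset.range T, x t i :=
      Finset.sum_nonneg fun t ht => hx t (Finset.mem_range.mp ht) i
    positivity
  · intro j
    -- linearity of mulVec
    have hmv : A.mulVec xbar j = (1 / (T:ℝ)) * ∑ t ∈ Finset.range T, A.mulVec (x t) j := by
      subst hxbar
      simp only [Matrix.mulVec, dotProduct]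
      calc ∑ i, A j i * (1 / (T:ℝ) * ∑ t ∈ Finset.range T, x t i)
          = ∑ i, ∑ t ∈ Finset.range T, 1 / (T:ℝ) * (A j i * x t i) := by
            refine Finset.sum_congr rfl fun i _ => ?_
            rw [Finset.mul_sum, Finset.mul_sum]
            exact Finset.sum_congr rfl fun t _ => by ring
        _ = ∑ t ∈ Finset.range T, ∑ i, 1 / (T:ℝ) * (A j i * x t i) := Finset.sum_comm
        _ = 1 / (T:ℝ) * ∑ t ∈ Finset.range T, ∑ i, A j i * x t i := by
            rw [Finset.mul_sum]
            exact Finset.sum_congr rfl fun t _ => by rw [Finset.mul_sum]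
    have hsumr : -(ρ * (Real.log m / η + η * T)) ≤ ∑ t ∈ Finset.range T, (A.mulVec (x t) j - b j) := by
      have heq : ∑ t ∈ Finset.range T, (A.mulVec (x t) j - b j)
          = ρ * ∑ t ∈ Finset.range T, c t j := by
        rw [Finset.mul_sum]
        refine Finset.sum_congr rfl fun t _ => ?_
        rw [hc]; field_simp
      rw [heq]
      have := hsumc j
      nlinarith
    have hsplit2 : ∑ t ∈ Finset.range T, (A.mulVec (x t) j - b j)
        = (∑ t ∈ Finset.range T, A.mulVec (x t) j) - T * b j := by
      rw [Finset.sum_sub_distrib, Finset.sum_const, Finset.card_range]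
      push_cast; ring
    rw [ge_iff_le, hmv]
    have hrw2 : -ρ * (η + Real.log m / (η * T))
        = (1 / (T:ℝ)) * (-(ρ * (Real.log m / η + η * T)) + T * b j) - b j := by
      field_simp
      ring
    rw [hrw2]
    have h1 : (1 / (T:ℝ)) * (-(ρ * (Real.log m / η + η * T)) + (T:ℝ) * b j)
        ≤ (1 / (T:ℝ)) * (∑ t ∈ Finset.range T, (A.mulVec (x t) j - b j) + (T:ℝ) * b j) := by
      apply mul_le_mul_of_nonneg_left _ (by positivity)
      linarith
    rw [hsplit2] at h1
    calc (1 / (T:ℝ)) * (-(ρ * (Real.log m / η + η * T)) + (T:ℝ) * b j) - b j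
        ≤ (1 / (T:ℝ)) * ((∑ t ∈ Finset.range T, A.mulVec (x t) j) - (T:ℝ) * b j + (T:ℝ) * b j) - b j := by linarith
      _ = (1 / (T:ℝ)) * ∑ t ∈ Finset.range T, A.mulVec (x t) j - b j := by ring_nf
end
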